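/- Let n ≥ 1, let j ∈ {1,…,n}, and let v be an n-dimensional unit vector all of whose entries lie in ℤ[1/2, i] = {x₀ + x₁·i : x₀, x₁ ∈ ℤ[1/2]}. Then there exist finitely many generators G₁, …, G_ℓ, each taken from the set {i_[a], X_[a,b], (ωH)_[a,b] : a, b distinct elements of {1,…,n}}, such that G₁ ⋯ G_ℓ v = e_j, the j-th standard basis vector. -/

import Mathlib

open Matrix Complex

noncomputable section

/-- The `m`-level operator of type `W` with indices `f 0, …, f (m-1)`:
for injective `f`, its `(f j', f k')` entry is `W j' k'` and it agrees
with the identity matrix elsewhere. -/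
def levelOp {n m : ℕ} (f : Fin m → Fin n) (W : Matrix (Fin m) (Fin m) ℂ) :
    Matrix (Fin n) (Fin n) ℂ := fun j k =>
  (∑ j' : Fin m, ∑ k' : Fin m, if f j' = j ∧ f k' = k then W j' k' else 0) +
  (if j = k ∧ ∀ j' : Fin m, f j' ≠ j then 1 else 0)

/-- The NOT gate `X`. -/
def Xmat : Matrix (Fin 2) (Fin 2) ℂ := !![0, 1; 1, 0]

/-- The Hadamard gate `H`. -/
def Hmat : Matrix (Fin 2) (Fin 2) ℂ := (Real.sqrt 2 : ℂ)⁻¹ • !![1, 1; 1, -1]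

/-- The gate `ωH = ((1+i)/2)[[1,1],[1,-1]]`, where `ω = e^{iπ/4}`. -/
def omegaHmat : Matrix (Fin 2) (Fin 2) ℂ :=
  ((1 + Complex.I) / 2) • !![1, 1; 1, -1]

/-- `G` is one of the generators `i_[a]`, `X_[a,b]`, `(ωH)_[a,b]` with `a ≠ b`. -/
def IsGaussGen {n : ℕ} (G : Matrix (Fin n) (Fin n) ℂ) : Prop :=
  (∃ a : Fin n, G = levelOp ![a] !![Complex.I]) ∨
  (∃ a b : Fin n, a ≠ b ∧ G = levelOp ![a, b] Xmat) ∨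
  (∃ a b : Fin n, a ≠ b ∧ G = levelOp ![a, b] omegaHmat)

/-- `x` is a dyadic fraction: an element of `ℤ[1/2]` (viewed inside `ℂ`). -/
def IsDyadic (x : ℂ) : Prop := ∃ (u : ℤ) (q : ℕ), x = (u : ℂ) / 2 ^ q

/-- `x` belongs to the ring `ℤ[1/2, i] = {x₀ + x₁·i : x₀, x₁ ∈ ℤ[1/2]}`. -/
def InDi (x : ℂ) : Prop :=
  ∃ x₀ x₁ : ℂ, IsDyadic x₀ ∧ IsDyadic x₁ ∧ x = x₀ + x₁ * Complex.I

/-!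
Write `v = w / (1 + i) ^ k` with `w` a vector of Gaussian integers; unitarity of `v` says
`∑ N(w r) = 2 ^ k`. If every entry has even norm, every entry is divisible by `1 + i` and `k`
drops by one. Otherwise, as the total norm is even, there are two entries of odd norm; after
multiplying one of them by a power of `i` (gate `i_[t]`) their sum and difference are divisible
by `2`, so `(ωH)_[s,t]` turns both into multiples of `1 + i`. This keeps `k` and the norm sum and
lowers the number of odd-norm entries. At `k = 0` a single entry is a unit, which powers of `i`
and one `X` move to `e_j`.
-/

open Function Relation GaussianInt ComplexConjugate

local notation "ℤ[i]" => GaussianInt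

lemma exists_eq_one_of_sum_eq_one {ι : Type*} [Fintype ι] {f : ι → ℤ} (h0 : ∀ i, 0 ≤ f i)
    (h1 : ∑ i, f i = 1) : ∃ a, f a = 1 ∧ ∀ b, b ≠ a → f b = 0 := by
  classical
  obtain ⟨a, -, ha⟩ := Finset.exists_ne_zero_of_sum_ne_zero (h1 ▸ one_ne_zero)
  have hsplit := Finset.add_sum_erase Finset.univ f (Finset.mem_univ a)
  have hrest : 0 ≤ ∑ i ∈ Finset.univ.erase a, f i := Finset.sum_nonneg fun i _ => h0 i
  have hfa : f a = 1 := by have := h0 a; omega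
  refine ⟨a, hfa, fun b hb => ?_⟩
  have hzero : ∑ i ∈ Finset.univ.erase a, f i = 0 := by omega
  exact (Finset.sum_eq_zero_iff_of_nonneg fun i _ => h0 i).1 hzero b (by simp [hb])

lemma sum_eq_sum_of_eq_off_pair {ι M : Type*} [Fintype ι] [AddCommGroup M]
    {f g : ι → M} {s t : ι} (hst : s ≠ t) (hoff : ∀ r, r ≠ s → r ≠ t → f r = g r)
    (hpair : f s + f t = g s + g t) : ∑ r, f r = ∑ r, g r := by
  rw [← sub_eq_zero, ← Finset.sum_sub_distrib,
    Fintype.sum_eq_add s t hst fun r hr => sub_eq_zero.2 (hoff r hr.1 hr.2),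
    sub_add_sub_comm, hpair, sub_self]

lemma exists_ne_odd_of_even_sum {ι : Type*} [Fintype ι] [DecidableEq ι] {f : ι → ℤ}
    (hsum : Even (∑ i, f i)) {s : ι} (hs : Odd (f s)) : ∃ t, t ≠ s ∧ Odd (f t) := by
  by_contra! h
  have hrest : Even (∑ i ∈ Finset.univ.erase s, f i) :=
    Finset.even_sum _ fun i hi => Int.not_odd_iff_even.1 (h i (Finset.ne_of_mem_erase hi))
  rw [← Finset.add_sum_erase _ _ (Finset.mem_univ s)] at hsum
  exact Int.not_even_iff_odd.2 (hs.add_even hrest) hsum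

section LevelOp

variable {n m : ℕ} (W : Matrix (Fin m) (Fin m) ℂ) (v : Fin n → ℂ)

lemma levelOp_mulVec_apply_self {f : Fin m → Fin n} (hf : Injective f) (j : Fin m) :
    (levelOp f W *ᵥ v) (f j) = ∑ k, W j k * v (f k) := by
  have hrow : ∀ c, levelOp f W (f j) c = ∑ k, if f k = c then W j k else 0 := by
    simp [levelOp, hf.eq_iff, ite_and]
  simp only [mulVec, dotProduct, hrow, Finset.sum_mul, ite_mul, zero_mul]
  rw [Finset.sum_comm]
  simp

lemma levelOp_mulVec_apply_of_forall_ne (f : Fin m → Fin n) {i : Fin n} (hi : ∀ j, f j ≠ i) :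
    (levelOp f W *ᵥ v) i = v i := by
  have hrow : levelOp f W i = Pi.single i 1 := by
    ext c
    simp [levelOp, hi, Pi.single_apply, eq_comm]
  simp [mulVec, hrow]

end LevelOp

variable {n : ℕ}

lemma injective_vecCons_pair {a b : Fin n} (hab : a ≠ b) : Injective ![a, b] := by
  simp [hab]

def GaussStep (v w : Fin n → ℂ) : Prop := ∃ G, IsGaussGen G ∧ G *ᵥ v = w

lemma exists_list_of_reflTransGen {v w : Fin n → ℂ} (h : ReflTransGen GaussStep v w) :
    ∃ L : List (Matrix (Fin n) (Fin n) ℂ),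
      (∀ G ∈ L, IsGaussGen G) ∧ L.prod *ᵥ v = w := by
  induction h with
  | refl => exact ⟨[], by simp, by simp⟩
  | tail _ hstep ih =>
    obtain ⟨G, hG, rfl⟩ := hstep
    obtain ⟨L, hL, rfl⟩ := ih
    refine ⟨G :: L, ?_, by simp [mulVec_mulVec]⟩
    simpa [hG] using hL

lemma gaussStep_update_I_mul (a : Fin n) (v : Fin n → ℂ) :
    GaussStep v (update v a (I * v a)) := by
  refine ⟨_, Or.inl ⟨a, rfl⟩, funext fun r => ?_⟩
  rcases eq_or_ne r a with rfl | hr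
  · simpa using levelOp_mulVec_apply_self !![I] v (f := ![r]) (injective_of_subsingleton _) 0
  · rw [update_of_ne hr]
    exact levelOp_mulVec_apply_of_forall_ne _ _ _ (by simpa using Ne.symm hr)

lemma gaussStep_comp_swap {a b : Fin n} (hab : a ≠ b) (v : Fin n → ℂ) :
    GaussStep v (v ∘ Equiv.swap a b) := by
  refine ⟨_, Or.inr (Or.inl ⟨a, b, hab, rfl⟩), funext fun r => ?_⟩
  have hf := injective_vecCons_pair hab
  rcases eq_or_ne r a with rfl | hra
  · simpa [Xmat] using levelOp_mulVec_apply_self Xmat v hf 0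
  rcases eq_or_ne r b with rfl | hrb
  · simpa [Xmat] using levelOp_mulVec_apply_self Xmat v hf 1
  rw [Function.comp_apply, Equiv.swap_apply_of_ne_of_ne hra hrb]
  exact levelOp_mulVec_apply_of_forall_ne _ _ _ (by simp [Fin.forall_fin_two, hra.symm, hrb.symm])

lemma gaussStep_omegaH {a b : Fin n} (hab : a ≠ b) (v : Fin n → ℂ) :
    GaussStep v (update (update v a ((1 + I) / 2 * (v a + v b))) b
      ((1 + I) / 2 * (v a - v b))) := by
  refine ⟨_, Or.inr (Or.inr ⟨a, b, hab, rfl⟩), funext fun r => ?_⟩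
  have hf := injective_vecCons_pair hab
  rcases eq_or_ne r a with rfl | hra
  · simpa [omegaHmat, update_of_ne hab, mul_add] using levelOp_mulVec_apply_self omegaHmat v hf 0
  rcases eq_or_ne r b with rfl | hrb
  · simpa [omegaHmat, mul_sub, ← sub_eq_add_neg] using levelOp_mulVec_apply_self omegaHmat v hf 1
  rw [update_of_ne hrb, update_of_ne hra]
  exact levelOp_mulVec_apply_of_forall_ne _ _ _ (by simp [Fin.forall_fin_two, hra.symm, hrb.symm])

namespace GaussianInt

lemma odd_norm_iff (z : ℤ[i]) : Odd z.norm ↔ Odd (z.re + z.im) := by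
  simp [Zsqrtd.norm_def, Int.odd_add, Int.odd_mul, Int.even_mul]

lemma toComplex_sqrtd : ((Zsqrtd.sqrtd : ℤ[i]) : ℂ) = I := by
  simp [toComplex_def]

lemma toComplex_one_add_sqrtd : ((⟨1, 1⟩ : ℤ[i]) : ℂ) = 1 + I := by
  simp [toComplex_def]

lemma norm_sqrtd : (Zsqrtd.sqrtd : ℤ[i]).norm = 1 := rfl

lemma norm_sqrtd_pow (e : ℕ) : (Zsqrtd.sqrtd ^ e : ℤ[i]).norm = 1 :=
  (map_pow Zsqrtd.normMonoidHom _ e).trans (by simp [Zsqrtd.normMonoidHom, norm_sqrtd])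

lemma norm_one_add_sqrtd : (⟨1, 1⟩ : ℤ[i]).norm = 2 := rfl

lemma exists_two_dvd_sub_sqrtd_pow_mul {z w : ℤ[i]} (hz : Odd z.norm) (hw : Odd w.norm) :
    ∃ e : ℕ, 2 ∣ z - Zsqrtd.sqrtd ^ e * w := by
  rw [odd_norm_iff, Int.odd_iff] at hz hw
  have h2 : (2 : ℤ[i]) = ((2 : ℤ) : ℤ[i]) := rfl
  simp only [h2, Zsqrtd.intCast_dvd]
  by_cases h : 2 ∣ z.re - w.re
  · exact ⟨0, by simp; omega⟩
  · exact ⟨1, by simp; omega⟩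

lemma exists_eq_one_add_sqrtd_mul {z : ℤ[i]} (hz : Even z.norm) :
    ∃ u : ℤ[i], z = ⟨1, 1⟩ * u := by
  rw [← Int.not_odd_iff_even, odd_norm_iff, Int.odd_iff] at hz
  obtain ⟨a, ha⟩ : 2 ∣ z.re + z.im := by omega
  refine ⟨⟨a, a - z.re⟩, ?_⟩
  ext <;> simp
  omega

lemma exists_sqrtd_pow_mul_eq_one {u : ℤ[i]} (hu : u.norm = 1) :
    ∃ e : ℕ, Zsqrtd.sqrtd ^ e * u = 1 := by
  obtain ⟨a, b⟩ := u
  have hab : a * a + b * b = 1 := by simpa [Zsqrtd.norm_def] using hu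
  have ha : -1 ≤ a ∧ a ≤ 1 := by constructor <;> nlinarith
  have hb : -1 ≤ b ∧ b ≤ 1 := by constructor <;> nlinarith
  obtain ⟨ha₀, ha₁⟩ := ha
  obtain ⟨hb₀, hb₁⟩ := hb
  interval_cases a <;> interval_cases b <;> norm_num at hab
  · exact ⟨2, by ext <;> simp [pow_succ]⟩
  · exact ⟨1, by ext <;> simp⟩
  · exact ⟨3, by ext <;> simp [pow_succ]⟩
  · exact ⟨0, by ext <;> simp⟩

lemma norm_add_add_norm_sub (p q : ℤ[i]) :
    (p + q).norm + (p - q).norm = 2 * (p.norm + q.norm) := by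
  simp only [Zsqrtd.norm_def, Zsqrtd.re_add, Zsqrtd.im_add, Zsqrtd.re_sub, Zsqrtd.im_sub]
  ring

lemma norm_one_add_sqrtd_mul (p : ℤ[i]) : (⟨1, 1⟩ * p : ℤ[i]).norm = 2 * p.norm := by
  rw [Zsqrtd.norm_mul, norm_one_add_sqrtd]

end GaussianInt

def scaledVec (k : ℕ) (w : Fin n → ℤ[i]) : Fin n → ℂ := fun r => (w r : ℂ) / (1 + I) ^ k

lemma scaledVec_update (k : ℕ) (w : Fin n → ℤ[i]) (a : Fin n) (z : ℤ[i]) :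
    scaledVec k (update w a z) = update (scaledVec k w) a ((z : ℂ) / (1 + I) ^ k) := by
  funext r
  rcases eq_or_ne r a with rfl | hr <;> simp [scaledVec, *]

lemma reflTransGen_scaledVec_update_sqrtd_pow_mul (k : ℕ) (w : Fin n → ℤ[i]) (a : Fin n)
    (e : ℕ) :
    ReflTransGen GaussStep (scaledVec k w)
      (scaledVec k (update w a (Zsqrtd.sqrtd ^ e * w a))) := by
  induction e with
  | zero => simpa using ReflTransGen.refl
  | succ e ih =>
    refine ih.tail ?_
    convert gaussStep_update_I_mul a _ using 1
    simp [scaledVec_update, scaledVec, pow_succ, toComplex_sqrtd]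
    congr 1
    ring

lemma reflTransGen_single_of_sum_norm_eq_one (j : Fin n) {w : Fin n → ℤ[i]}
    (hw : ∑ r, (w r).norm = 1) :
    ReflTransGen GaussStep (scaledVec 0 w) (Pi.single j 1) := by
  obtain ⟨a, ha, hzero⟩ := exists_eq_one_of_sum_eq_one (fun r => norm_nonneg (w r)) hw
  obtain ⟨e, he⟩ := exists_sqrtd_pow_mul_eq_one ha
  have hsingle : scaledVec 0 (update w a (Zsqrtd.sqrtd ^ e * w a)) = Pi.single a 1 := by
    funext r
    rcases eq_or_ne r a with rfl | hr
    · simp [scaledVec, he]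
    · simp [scaledVec, hr, norm_eq_zero.1 (hzero r hr)]
  have hswap : ReflTransGen GaussStep (Pi.single a 1 : Fin n → ℂ) (Pi.single j 1) := by
    rcases eq_or_ne a j with rfl | haj
    · rfl
    · convert ReflTransGen.single (gaussStep_comp_swap haj _)
      funext r
      simp [Pi.single_apply, Equiv.swap_apply_eq_iff]
  exact (hsingle ▸ reflTransGen_scaledVec_update_sqrtd_pow_mul 0 w a e).trans hswap

lemma reflTransGen_scaledVec_omegaH (k : ℕ) {w : Fin n → ℤ[i]} {s t : Fin n} (hst : s ≠ t)
    {e : ℕ} {p q : ℤ[i]} (hs : w s = p + q) (ht : Zsqrtd.sqrtd ^ e * w t = p - q) :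
    ReflTransGen GaussStep (scaledVec k w)
      (scaledVec k (update (update w s (⟨1, 1⟩ * p)) t (⟨1, 1⟩ * q))) := by
  have hsC : (w s : ℂ) = p + q := by rw [hs, map_add]
  have htC : (I ^ e * w t : ℂ) = p - q := by
    rw [← toComplex_sqrtd, ← map_pow, ← map_mul, ht, map_sub]
  refine (reflTransGen_scaledVec_update_sqrtd_pow_mul k w t e).tail ?_
  convert gaussStep_omegaH hst _ using 1
  funext r
  rcases eq_or_ne r t with rfl | hrt
  · simp [scaledVec, hst, toComplex_one_add_sqrtd, toComplex_sqrtd]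
    linear_combination (-(1 + I) / (2 * (1 + I) ^ k)) * hsC
      + ((1 + I) / (2 * (1 + I) ^ k)) * htC
  rcases eq_or_ne r s with rfl | hrs
  · simp [scaledVec, hst, toComplex_one_add_sqrtd, toComplex_sqrtd]
    linear_combination (-(1 + I) / (2 * (1 + I) ^ k)) * hsC
      - ((1 + I) / (2 * (1 + I) ^ k)) * htC
  · simp [scaledVec, hrs, hrt]

def oddNormSet (w : Fin n → ℤ[i]) : Finset (Fin n) := {r | Odd (w r).norm}

lemma card_oddNormSet_update_update_lt {w : Fin n → ℤ[i]} {s t : Fin n} (hst : s ≠ t)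
    (hs : Odd (w s).norm) (p q : ℤ[i]) :
    (oddNormSet (update (update w s (⟨1, 1⟩ * p)) t (⟨1, 1⟩ * q))).card
      < (oddNormSet w).card := by
  have hsub : oddNormSet (update (update w s (⟨1, 1⟩ * p)) t (⟨1, 1⟩ * q))
      ⊆ (oddNormSet w).erase s := by
    intro r hr
    simp only [oddNormSet, Finset.mem_filter, Finset.mem_univ, true_and,
      Finset.mem_erase] at hr ⊢
    rcases eq_or_ne r s with rfl | hrs
    · simp only [update_self, update_of_ne hst, norm_one_add_sqrtd_mul] at hr
      exact absurd hr (Int.not_odd_iff_even.2 (even_two_mul _))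
    rcases eq_or_ne r t with rfl | hrt
    · simp only [update_self, norm_one_add_sqrtd_mul] at hr
      exact absurd hr (Int.not_odd_iff_even.2 (even_two_mul _))
    rw [update_of_ne hrt, update_of_ne hrs] at hr
    exact ⟨hrs, hr⟩
  exact (Finset.card_le_card hsub).trans_lt
    (Finset.card_erase_lt_of_mem (by simpa [oddNormSet] using hs))

lemma exists_reflTransGen_card_oddNormSet_lt (k : ℕ) {w : Fin n → ℤ[i]} {s t : Fin n}
    (hst : s ≠ t) (hs : Odd (w s).norm) (ht : Odd (w t).norm) :
    ∃ w' : Fin n → ℤ[i], ReflTransGen GaussStep (scaledVec k w) (scaledVec k w') ∧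
      ∑ r, (w' r).norm = ∑ r, (w r).norm ∧ (oddNormSet w').card < (oddNormSet w).card := by
  obtain ⟨e, q, hq⟩ := exists_two_dvd_sub_sqrtd_pow_mul hs ht
  set p := q + Zsqrtd.sqrtd ^ e * w t
  have hs_eq : w s = p + q := by linear_combination hq
  have ht_eq : Zsqrtd.sqrtd ^ e * w t = p - q := by ring
  refine ⟨_, reflTransGen_scaledVec_omegaH k hst hs_eq ht_eq, ?_,
    card_oddNormSet_update_update_lt hst hs p q⟩
  refine sum_eq_sum_of_eq_off_pair hst (fun r hrs hrt => by simp [hrs, hrt]) ?_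
  have hnorm := norm_add_add_norm_sub p q
  rw [← hs_eq, ← ht_eq, Zsqrtd.norm_mul, norm_sqrtd_pow, one_mul] at hnorm
  simp only [update_self, update_of_ne hst, norm_one_add_sqrtd_mul]
  linarith

lemma scaledVec_succ_one_add_sqrtd_mul (k : ℕ) (u : Fin n → ℤ[i]) :
    scaledVec (k + 1) (fun r => ⟨1, 1⟩ * u r) = scaledVec k u := by
  funext r
  have : 1 + I ≠ 0 := by simp [Complex.ext_iff]
  simp [scaledVec, toComplex_one_add_sqrtd, pow_succ]
  field_simp

theorem reflTransGen_single_of_sum_norm_eq_two_pow (j : Fin n) (k : ℕ) (w : Fin n → ℤ[i])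
    (hw : ∑ r, (w r).norm = 2 ^ k) :
    ReflTransGen GaussStep (scaledVec k w) (Pi.single j 1) := by
  induction k generalizing w with
  | zero => exact reflTransGen_single_of_sum_norm_eq_one j (by simpa using hw)
  | succ k ih =>
    induction hc : (oddNormSet w).card using Nat.strong_induction_on generalizing w with
    | _ c ihc =>
    by_cases hodd : ∃ s, Odd (w s).norm
    · obtain ⟨s, hs⟩ := hodd
      have heven : Even (∑ r, (w r).norm) := by rw [hw]; exact ⟨2 ^ k, by ring⟩
      obtain ⟨t, hts, ht⟩ := exists_ne_odd_of_even_sum heven hs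
      obtain ⟨w', hstep, hsum, hlt⟩ :=
        exists_reflTransGen_card_oddNormSet_lt (k + 1) hts.symm hs ht
      exact hstep.trans (ihc _ (hc ▸ hlt) w' (hsum.trans hw) rfl)
    · simp only [not_exists] at hodd
      choose u hu using fun r => exists_eq_one_add_sqrtd_mul (Int.not_odd_iff_even.1 (hodd r))
      obtain rfl : w = fun r => ⟨1, 1⟩ * u r := funext hu
      rw [scaledVec_succ_one_add_sqrtd_mul]
      refine ih u ?_
      simp only [norm_one_add_sqrtd_mul, ← Finset.mul_sum, pow_succ'] at hw
      omega

lemma InDi.exists_eq_div_two_pow {x : ℂ} (h : InDi x) :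
    ∃ (z : ℤ[i]) (q : ℕ), x = z / 2 ^ q := by
  obtain ⟨x₀, x₁, ⟨u₀, q₀, rfl⟩, ⟨u₁, q₁, rfl⟩, rfl⟩ := h
  refine ⟨⟨u₀ * 2 ^ q₁, u₁ * 2 ^ q₀⟩, q₀ + q₁, ?_⟩
  rw [toComplex_def']
  push_cast
  field_simp
  ring

lemma exists_eq_scaledVec {v : Fin n → ℂ} (hv : ∀ r, InDi (v r)) :
    ∃ k w, v = scaledVec k w := by
  choose z q hzq using fun r => (hv r).exists_eq_div_two_pow
  set Q := Finset.univ.sup q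
  -- `2 = -i (1 + i) ^ 2` is the source of the factor `i ^ Q`
  refine ⟨2 * Q, fun r => Zsqrtd.sqrtd ^ Q * 2 ^ (Q - q r) * z r, funext fun r => ?_⟩
  have hQ : (2 : ℂ) ^ Q = 2 ^ (Q - q r) * 2 ^ q r := by
    rw [← pow_add, Nat.sub_add_cancel (Finset.le_sup (Finset.mem_univ r))]
  have hsq : (1 + I) ^ 2 = 2 * I := by ring_nf; simp
  simp only [scaledVec, hzq r, map_mul, map_pow, toComplex_sqrtd, map_ofNat, pow_mul, hsq,
    mul_pow, hQ]
  field_simp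

lemma sum_norm_eq_two_pow_of_sum_conj_mul_self_eq_one {k : ℕ} {w : Fin n → ℤ[i]}
    (hunit : ∑ r, conj (scaledVec k w r) * scaledVec k w r = 1) :
    ∑ r, (w r).norm = 2 ^ k := by
  have hterm : ∀ r, conj (scaledVec k w r) * scaledVec k w r = ((w r).norm : ℂ) / 2 ^ k := by
    intro r
    rw [← normSq_eq_conj_mul_self, intCast_complex_norm, scaledVec, normSq_div, map_pow]
    simp [normSq_apply]
    norm_num
  simp_rw [hterm, ← Finset.sum_div, div_eq_one_iff_eq (pow_ne_zero k (two_ne_zero' ℂ))] at hunit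
  exact_mod_cast hunit

theorem stmt19_general (n : ℕ) (j : Fin n) (v : Fin n → ℂ)
    (hunit : ∑ k, (starRingEnd ℂ) (v k) * v k = 1)
    (hR : ∀ k, InDi (v k)) :
    ∃ L : List (Matrix (Fin n) (Fin n) ℂ),
      (∀ G ∈ L, IsGaussGen G) ∧
      L.prod.mulVec v = fun k => if k = j then (1 : ℂ) else 0 := by
  obtain ⟨k, w, rfl⟩ := exists_eq_scaledVec hR
  have hw := sum_norm_eq_two_pow_of_sum_conj_mul_self_eq_one hunit
  obtain ⟨L, hL, hLv⟩ :=
    exists_list_of_reflTransGen (reflTransGen_single_of_sum_norm_eq_two_pow j k w hw)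
  exact ⟨L, hL, hLv.trans (funext fun r => Pi.single_apply j 1 r)⟩

/-- Every unit vector over `ℤ[1/2, i]` can be reduced to any standard basis
vector `e_j` by generators `i_[a]`, `X_[a,b]`, `(ωH)_[a,b]`. -/
theorem stmt19 (n : ℕ) (hn : 1 ≤ n) (j : Fin n) (v : Fin n → ℂ)
    (hunit : ∑ k, (starRingEnd ℂ) (v k) * v k = 1)
    (hR : ∀ k, InDi (v k)) :
    ∃ L : List (Matrix (Fin n) (Fin n) ℂ),
      (∀ G ∈ L, IsGaussGen G) ∧
      L.prod.mulVec v = fun k => if k = j then (1 : ℂ) else 0 :=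
  stmt19_general n j v hunit hR
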